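/- FSL is topologically Weihrauch reducible to overt choice for S₀: there exist continuous functions K and H such that K maps every p : ℕ → ℕ enumerating an FSL-instance tree T ⊆ List Bool to a name of some nonempty closed set A ⊆ S₀, and H maps (p, q), for q any name of any point u ∈ A, to a δ_𝒮-name r such that δ_𝒮(r) is a leaf of T. -/

import Mathlib

/-- `p` enumerates `S` if `S = {n | ∃ k, p k = n + 1}`. -/
def Enumerates (p : ℕ → ℕ) (S : Set ℕ) : Prop := S = {n | ∃ k, p k = n + 1}

/-- The space `S₀`: finite sequences of naturals. -/
structure S0 where
  val : List ℕ

/-- The topology of `S₀` is generated by the sets `{u | w is not a prefix of u}`. -/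
instance : TopologicalSpace S0 :=
  TopologicalSpace.generateFrom {V | ∃ w : List ℕ, V = {u : S0 | ¬ w <+: u.val}}

/-- The basic open set of `S₀` determined by a finite set `F` of words:
all points having no prefix in `F`. -/
def NF (F : Finset (List ℕ)) : Set S0 := {u | ∀ w ∈ F, ¬ w <+: u.val}

/-- A name of a point `u ∈ S₀` enumerates the codes of the finite sets `F` with `u ∈ N_F`. -/
def S0PointName (encF : Finset (List ℕ) → ℕ) (u : S0) (p : ℕ → ℕ) : Prop :=
  Enumerates p {n | ∃ F : Finset (List ℕ), encF F = n ∧ u ∈ NF F}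

/-- A name of a closed set `A ⊆ S₀` enumerates the codes of the finite sets `F` with
`N_F ∩ A ≠ ∅`. -/
def S0ClosedName (encF : Finset (List ℕ) → ℕ) (A : Set S0) (p : ℕ → ℕ) : Prop :=
  Enumerates p {n | ∃ F : Finset (List ℕ), encF F = n ∧ (NF F ∩ A).Nonempty}

/-- `p` enumerates the tree `T ⊆ List Bool` (via the injective encoding `code`) if
`T = {w | ∃ k, p k = code w + 1}`. -/
def EnumeratesTree (code : List Bool → ℕ) (p : ℕ → ℕ) (T : Set (List Bool)) : Prop :=
  T = {w | ∃ k, p k = code w + 1}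

/-- `w` is a leaf of `T`: it belongs to `T` and has no proper extension in `T`. -/
def IsLeaf (T : Set (List Bool)) (w : List Bool) : Prop :=
  w ∈ T ∧ ∀ u ∈ T, w <+: u → u = w

/-- `T` is an FSL-instance: a nonempty prefix-closed set of binary words such that every
element has an extension in `T` that is a leaf of `T`. -/
def FSLTree (T : Set (List Bool)) : Prop :=
  T.Nonempty ∧ (∀ w ∈ T, ∀ u, u <+: w → u ∈ T) ∧
    ∀ w ∈ T, ∃ u, w <+: u ∧ IsLeaf T u

/-- The letter contributed by one pair of bits in the representation `δ_𝒮`. -/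
def pairLetter : Bool → Bool → List Bool
  | true, false => [false]
  | false, true => [true]
  | _, _ => []

/-- The word read off from the first `n` consecutive pairs of `r`. -/
def decodePairs (r : ℕ → Bool) : ℕ → List Bool
  | 0 => []
  | n + 1 => decodePairs r n ++ pairLetter (r (2 * n)) (r (2 * n + 1))

/-- `r` is a `δ_𝒮`-name of the word `w`. -/
def DeltaS (r : ℕ → Bool) (w : List Bool) : Prop :=
  ∃ n : ℕ, (∀ k, 2 * n ≤ k → r k = false) ∧ decodePairs r n = w

/-!
A point `u` of `S₀` is read as a parse string over the enumeration `p` of the tree. The parser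
keeps a state `(c, τ)`: the current node `c` and a horizon `τ`. A letter `ℓ` is admissible only if
its stamp `ℓ / 2` is the first stage `≥ τ` at which `p` enumerates a proper extension of `c`; an
even letter moves to that extension, an odd letter skips it, and the horizon moves past the stamp.
`K` names the set `A(p)` of points having a prefix that parses to a leaf.

`A(p)` is closed because after a parsable prefix only two letters are admissible, so finitely many
forbidden prefixes cut a point outside `A(p)` off from it. It is nonempty because an FSL-instance
has a leaf. `N_F` meets `A(p)` iff some finite part of `p` certifies this for every valid
continuation of it: if a leaf that was used stops being a leaf later, the parse string can be
extended by letters whose stamps are larger than every letter occurring in `F`, up to a new leaf.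

`H` grows, one letter per pair of bits, a word that is a prefix of every leaf encoded by a point
whose name agrees with `q`, relative to an enumeration agreeing with `p`, on the parts read so
far. Once `q` has listed the finite set of one-letter deviations from the parse string of `u`,
every such point parses along an initial part of that string or extends it, so its leaf extends
the leaf `w` encoded by `u`; hence the word converges to `w`.
-/

theorem IsLeast.of_agree_below {α : Type*} [LinearOrder α] {S S' : Set α} {a k : α}
    (h : ∀ j < k, j ∈ S' ↔ j ∈ S) (ha : IsLeast S a) (hak : a < k) : IsLeast S' a := by
  refine ⟨(h a hak).2 ha.1, fun j hj => ?_⟩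
  by_contra! hja
  exact (ha.2 ((h j (hja.trans hak)).1 hj)).not_gt hja

theorem List.exists_take_succ_not_prefix {α : Type*} {x v : List α} (h : ¬ x <+: v) :
    ∃ i < x.length, x.take i <+: v ∧ ¬ x.take (i + 1) <+: v := by
  classical
  have hex : ∃ i, ¬ x.take i <+: v := ⟨x.length, by simpa using h⟩
  obtain ⟨i, hi⟩ := Nat.exists_eq_succ_of_ne_zero fun h0 : Nat.find hex = 0 =>
    Nat.find_spec hex (by simp [h0])
  have hstop := Nat.find_spec hex
  have hprev : x.take i <+: v := not_not.1 (Nat.find_min hex (by omega))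
  rw [hi] at hstop
  refine ⟨i, ?_, hprev, hstop⟩
  by_contra! hle
  rw [List.take_of_length_le (by omega)] at hstop hprev
  exact hstop hprev

theorem isOpen_NF (F : Finset (List ℕ)) : IsOpen (NF F) := by
  have : NF F = ⋂ w ∈ F, {u : S0 | ¬ w <+: u.val} := by ext u; simp [NF]
  rw [this]
  exact isOpen_biInter_finset fun w _ => TopologicalSpace.isOpen_generateFrom_of_mem ⟨w, rfl⟩

theorem List.IsPrefix.of_append_of_forall_notMem {α : Type*} {f x y : List α} (h : f <+: x ++ y)
    (hy : ∀ a ∈ y, a ∉ f) : f <+: x := by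
  rcases List.prefix_or_prefix_of_prefix h (List.prefix_append x y) with hfx | ⟨t, rfl⟩
  · exact hfx
  · cases t with
    | nil => simp
    | cons a t =>
      have hty : a :: t <+: y := (List.prefix_append_right_inj x).1 h
      exact absurd (by simp) (hy a (hty.subset (by simp)))

theorem PiNat.cylinder_mem_nhds {E : ℕ → Type*} [∀ n, TopologicalSpace (E n)]
    [∀ n, DiscreteTopology (E n)] (x : ∀ n, E n) (n : ℕ) : PiNat.cylinder x n ∈ nhds x :=
  (PiNat.isOpen_cylinder E x n).mem_nhds (PiNat.self_mem_cylinder x n)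

theorem exists_isLeaf_of_not_isLeaf {T : Set (List Bool)} (hT : FSLTree T) {w : List Bool}
    (hw : w ∈ T) (hnot : ¬ IsLeaf T w) : ∃ w', IsLeaf T w' ∧ w <+: w' ∧ w ≠ w' := by
  obtain ⟨e, heT, hwe, hne⟩ : ∃ e ∈ T, w <+: e ∧ e ≠ w := by
    by_contra! h
    exact hnot ⟨hw, h⟩
  obtain ⟨w', hew', hw'⟩ := hT.2.2 e heT
  refine ⟨w', hw', hwe.trans hew', fun h => hne ?_⟩
  subst h
  exact hew'.eq_of_length (le_antisymm hew'.length_le hwe.length_le)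

theorem S0PointName.exists_eq {encF : Finset (List ℕ) → ℕ} {u : S0} {q : ℕ → ℕ}
    (hq : S0PointName encF u q) {F : Finset (List ℕ)} (hu : u ∈ NF F) :
    ∃ κ, q κ = encF F + 1 := by
  have hmem : encF F ∈ {n | ∃ F, encF F = n ∧ u ∈ NF F} := ⟨F, rfl, hu⟩
  rwa [hq] at hmem

theorem S0PointName.mem_NF {encF : Finset (List ℕ) → ℕ} (hencF : Function.Injective encF)
    {u : S0} {q : ℕ → ℕ} (hq : S0PointName encF u q) {F : Finset (List ℕ)} {κ : ℕ}
    (h : q κ = encF F + 1) : u ∈ NF F := by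
  have hmem : encF F ∈ {n | ∃ k, q k = n + 1} := ⟨κ, h⟩
  rw [← hq] at hmem
  obtain ⟨F', hF', hu⟩ := hmem
  rwa [← hencF hF']

def pairBits : List Bool → Bool × Bool
  | [false] => (true, false)
  | [true] => (false, true)
  | _ => (false, false)

theorem pairLetter_pairBits {d : List Bool} (hd : d.length ≤ 1) :
    pairLetter (pairBits d).1 (pairBits d).2 = d := by
  match d, hd with
  | [], _ => rfl
  | [false], _ => rfl
  | [true], _ => rfl

def pairName (E : ℕ → List Bool) (k : ℕ) : Bool :=
  let b := pairBits ((E (k / 2 + 1)).drop (E (k / 2)).length)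
  if k % 2 = 0 then b.1 else b.2

theorem decodePairs_pairName {E : ℕ → List Bool} (h0 : E 0 = [])
    (hE : ∀ n, ∃ d : List Bool, d.length ≤ 1 ∧ E (n + 1) = E n ++ d) (n : ℕ) :
    decodePairs (pairName E) n = E n := by
  induction n with
  | zero => exact h0.symm
  | succ n ih =>
    obtain ⟨d, hd, hn⟩ := hE n
    have e0 : 2 * n / 2 = n := by omega
    have e1 : (2 * n + 1) / 2 = n := by omega
    simp [decodePairs, ih, pairName, e0, e1, hn, pairLetter_pairBits hd]

theorem deltaS_pairName {E : ℕ → List Bool} (h0 : E 0 = [])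
    (hE : ∀ n, ∃ d : List Bool, d.length ≤ 1 ∧ E (n + 1) = E n ++ d) {N : ℕ} {w : List Bool}
    (hN : ∀ n ≥ N, E n = w) : DeltaS (pairName E) w := by
  refine ⟨N, fun k hk => ?_, by rw [decodePairs_pairName h0 hE, hN N le_rfl]⟩
  simp [pairName, hN (k / 2) (by omega), hN (k / 2 + 1) (by omega), pairBits]

namespace FSLReduction

open PiNat

variable (code : List Bool → ℕ) {encF : Finset (List ℕ) → ℕ} {p p' q q' : ℕ → ℕ}
  {s s' s₁ : List Bool × ℕ} {ℓ : ℕ} {u : S0} {w : List Bool}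

/-! ### Parsing points of `S₀` -/

def tree (p : ℕ → ℕ) : Set (List Bool) := {w | ∃ k, p k = code w + 1}

def Announces (p : ℕ → ℕ) (c : List Bool) (a : ℕ) : Prop :=
  ∃ e, p a = code e + 1 ∧ c <+: e ∧ c ≠ e

def announcementsFrom (p : ℕ → ℕ) (s : List Bool × ℕ) : Set ℕ :=
  {a | s.2 ≤ a ∧ Announces code p s.1 a}

open scoped Classical in
noncomputable def step (p : ℕ → ℕ) (s : List Bool × ℕ) (ℓ : ℕ) : Option (List Bool × ℕ) :=
  if IsLeast (announcementsFrom code p s) (ℓ / 2) then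
    some (if ℓ % 2 = 0 then Function.invFun code (p (ℓ / 2) - 1) else s.1, ℓ / 2 + 1)
  else none

noncomputable def parse (p : ℕ → ℕ) (s : List Bool × ℕ) (x : List ℕ) : Option (List Bool × ℕ) :=
  x.foldlM (step code p) s

def Encodes (p : ℕ → ℕ) (u : S0) (w : List Bool) : Prop :=
  ∃ x τ, x <+: u.val ∧ parse code p ([], 0) x = some (w, τ) ∧ IsLeaf (tree code p) w

def answerSet (p : ℕ → ℕ) : Set S0 := {u | ∃ w, Encodes code p u w}

variable {code}

theorem Encodes.isLeaf (hw : Encodes code p u w) : IsLeaf (tree code p) w := by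
  obtain ⟨-, -, -, -, hleaf⟩ := hw
  exact hleaf

theorem invFun_sub_one (hcode : Function.Injective code) {e : List Bool} {v : ℕ}
    (h : v = code e + 1) : Function.invFun code (v - 1) = e := by
  rw [h, Nat.add_sub_cancel]
  exact Function.leftInverse_invFun hcode e

theorem isLeast_of_step_eq_some (h : step code p s ℓ = some s') :
    IsLeast (announcementsFrom code p s) (ℓ / 2) := by
  by_contra hl
  simp [step, hl] at h

theorem step_eq_some_snd (h : step code p s ℓ = some s') : s'.2 = ℓ / 2 + 1 := by
  rw [step, if_pos (isLeast_of_step_eq_some h)] at h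
  cases h
  rfl

theorem prefix_of_step_eq_some (hcode : Function.Injective code)
    (h : step code p s ℓ = some s') : s.1 <+: s'.1 := by
  have hl := isLeast_of_step_eq_some h
  rw [step, if_pos hl] at h
  cases h
  obtain ⟨e, he, hce, -⟩ := hl.1.2
  split_ifs
  · rwa [invFun_sub_one hcode he]
  · exact List.prefix_refl _

theorem step_even {a : ℕ} (ha : IsLeast (announcementsFrom code p s) a) :
    step code p s (2 * a) = some (Function.invFun code (p a - 1), a + 1) := by
  have : 2 * a / 2 = a := by omega
  simp [step, this, ha]

theorem step_odd {a : ℕ} (ha : IsLeast (announcementsFrom code p s) a) :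
    step code p s (2 * a + 1) = some (s.1, a + 1) := by
  have : (2 * a + 1) / 2 = a := by omega
  simp [step, this, ha]

theorem parse_cons_eq_some {x : List ℕ} :
    parse code p s (ℓ :: x) = some s' ↔
      ∃ s₁, step code p s ℓ = some s₁ ∧ parse code p s₁ x = some s' := by
  simp only [parse, List.foldlM_cons, bind, Option.bind_eq_some_iff]

theorem parse_append_eq_some {x y : List ℕ} :
    parse code p s (x ++ y) = some s' ↔
      ∃ s₁, parse code p s x = some s₁ ∧ parse code p s₁ y = some s' := by
  simp only [parse, List.foldlM_append, bind, Option.bind_eq_some_iff]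

theorem le_of_parse_eq_some {x : List ℕ} (h : parse code p s x = some s') : s.2 ≤ s'.2 := by
  induction x generalizing s with
  | nil => cases h; rfl
  | cons ℓ x ih =>
    obtain ⟨s₁, hs, hx⟩ := parse_cons_eq_some.1 h
    have := (isLeast_of_step_eq_some hs).1.1
    have := step_eq_some_snd hs
    have := ih hx
    omega

theorem prefix_of_parse_eq_some (hcode : Function.Injective code) {x : List ℕ}
    (h : parse code p s x = some s') : s.1 <+: s'.1 := by
  induction x generalizing s with
  | nil => cases h; exact List.prefix_refl _
  | cons ℓ x ih =>
    obtain ⟨s₁, hs, hx⟩ := parse_cons_eq_some.1 h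
    exact (prefix_of_step_eq_some hcode hs).trans (ih hx)

theorem parse_take_eq_some {x : List ℕ} (h : parse code p s x = some s') (i : ℕ) :
    ∃ s₁, parse code p s (x.take i) = some s₁ ∧ parse code p s₁ (x.drop i) = some s' := by
  rw [← List.take_append_drop i x] at h
  exact parse_append_eq_some.1 h

theorem announces_congr {c : List Bool} {a k : ℕ} (hp : p' ∈ cylinder p k) (ha : a < k) :
    Announces code p' c a ↔ Announces code p c a := by
  rw [Announces, Announces, mem_cylinder_iff.1 hp a ha]

theorem mem_announcementsFrom_congr {a k : ℕ} (hp : p' ∈ cylinder p k) (ha : a < k) :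
    a ∈ announcementsFrom code p' s ↔ a ∈ announcementsFrom code p s :=
  and_congr_right fun _ => announces_congr hp ha

theorem step_congr (h : step code p s ℓ = some s₁) (hp : p' ∈ cylinder p s₁.2) :
    step code p' s ℓ = some s₁ := by
  have hl := isLeast_of_step_eq_some h
  have hk : ℓ / 2 < s₁.2 := by rw [step_eq_some_snd h]; omega
  have hl' : IsLeast (announcementsFrom code p' s) (ℓ / 2) :=
    hl.of_agree_below (fun j hj => mem_announcementsFrom_congr hp hj) hk
  rw [step, if_pos hl] at h
  rw [step, if_pos hl', mem_cylinder_iff.1 hp _ hk, h]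

theorem isLeast_of_step_of_agree {s₂ : List Bool × ℕ} {a b k : ℕ}
    (hb : step code p s b = some s₁) (ha : step code p' s a = some s₂)
    (hp : p' ∈ cylinder p k) (hbk : b / 2 < k) :
    IsLeast (announcementsFrom code p s) (a / 2) := by
  have hb' := isLeast_of_step_eq_some hb
  rwa [(isLeast_of_step_eq_some ha).unique
    (hb'.of_agree_below (fun j hj => mem_announcementsFrom_congr hp hj) hbk)]

theorem parse_congr {x : List ℕ} (h : parse code p s x = some s') (hp : p' ∈ cylinder p s'.2) :
    parse code p' s x = some s' := by
  induction x generalizing s with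
  | nil => exact h
  | cons ℓ x ih =>
    obtain ⟨s₁, hs, hx⟩ := parse_cons_eq_some.1 h
    exact parse_cons_eq_some.2
      ⟨s₁, step_congr hs (cylinder_anti p (le_of_parse_eq_some hx) hp), ih hx⟩

theorem exists_parse_of_announces (c : List Bool) (τ A : ℕ) (hτ : τ ≤ A)
    (hA : Announces code p c A) :
    ∃ x, parse code p (c, τ) x = some (Function.invFun code (p A - 1), A + 1) ∧
      ∀ ℓ ∈ x, Announces code p c (ℓ / 2) := by
  have hmem : A ∈ announcementsFrom code p (c, τ) := ⟨hτ, hA⟩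
  obtain ⟨a, ha⟩ : ∃ a, IsLeast (announcementsFrom code p (c, τ)) a :=
    ⟨_, isLeast_csInf ⟨A, hmem⟩⟩
  have hodd : (2 * a + 1) / 2 = a := by omega
  rcases (ha.2 hmem).eq_or_lt with rfl | hlt
  · refine ⟨[2 * a], parse_cons_eq_some.2 ⟨_, step_even ha, rfl⟩, ?_⟩
    simpa using hA
  · have : τ ≤ a := ha.1.1
    obtain ⟨x, hx, hxA⟩ := exists_parse_of_announces c (a + 1) A hlt hA
    refine ⟨(2 * a + 1) :: x, parse_cons_eq_some.2 ⟨_, step_odd ha, hx⟩, ?_⟩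
    simpa [hodd] using ⟨ha.1.2, hxA⟩
termination_by A - τ

theorem answerSet_nonempty (hcode : Function.Injective code) (hT : FSLTree (tree code p)) :
    (answerSet code p).Nonempty := by
  obtain ⟨⟨w₀, hw₀⟩, hclosed, hleaf⟩ := hT
  obtain ⟨w, -, hw⟩ := hleaf [] (hclosed w₀ hw₀ [] List.nil_prefix)
  by_cases hnil : w = []
  · subst hnil
    exact ⟨⟨[]⟩, [], [], 0, List.nil_prefix, rfl, hw⟩
  · obtain ⟨A, hA⟩ := hw.1
    obtain ⟨x, hx, -⟩ :=
      exists_parse_of_announces [] 0 A A.zero_le ⟨w, hA, List.nil_prefix, Ne.symm hnil⟩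
    rw [invFun_sub_one hcode hA] at hx
    exact ⟨⟨x⟩, w, x, A + 1, List.prefix_refl x, hx, hw⟩

/-! ### The closed set `A(p)` -/

variable (code) in
noncomputable def nextStamp (p : ℕ → ℕ) (y : List ℕ) : ℕ :=
  match parse code p ([], 0) y with
  | some s => sInf (announcementsFrom code p s)
  | none => 0

variable (code) in
noncomputable def deviations (p : ℕ → ℕ) (v : List ℕ) (n : ℕ) : Finset (List ℕ) :=
  ((Finset.range n ×ˢ Finset.range 2).image fun ib =>
    v.take ib.1 ++ [2 * nextStamp code p (v.take ib.1) + ib.2]).filter (¬ · <+: v)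

theorem not_prefix_of_mem_deviations {v d : List ℕ} {n : ℕ} (hd : d ∈ deviations code p v n) :
    ¬ d <+: v :=
  (Finset.mem_filter.1 hd).2

theorem length_le_of_mem_deviations {v d : List ℕ} {n : ℕ}
    (hd : d ∈ deviations code p v n) : d.length ≤ n := by
  obtain ⟨⟨i, b⟩, hib, rfl⟩ := Finset.mem_image.1 (Finset.mem_filter.1 hd).1
  have := (Finset.mem_product.1 hib).1
  simp only [Finset.mem_range] at this
  simp only [List.length_append, List.length_take, List.length_singleton]
  omega

theorem take_succ_mem_deviations {x v : List ℕ} {i n : ℕ} (hi : i < x.length) (hin : i < n)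
    (hv : x.take i <+: v) (hx : parse code p ([], 0) (x.take i) = some s)
    (hl : IsLeast (announcementsFrom code p s) (x[i] / 2)) (hnot : ¬ x.take (i + 1) <+: v) :
    x.take (i + 1) ∈ deviations code p v n := by
  refine Finset.mem_filter.2 ⟨Finset.mem_image.2 ⟨(i, x[i] % 2), by simp [hin]; omega, ?_⟩, hnot⟩
  have hvi : v.take i = x.take i := by
    rw [List.prefix_iff_eq_take.1 hv, List.length_take_of_le hi.le]
  have hns : nextStamp code p (x.take i) = x[i] / 2 := by simp [nextStamp, hx, hl.csInf_eq]
  rw [hvi, hns, ← List.take_concat_get' x i hi, Nat.div_add_mod]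

theorem isClosed_answerSet (p : ℕ → ℕ) : IsClosed (answerSet code p) := by
  refine isOpen_compl_iff.1 <| isOpen_iff_forall_mem_open.2 fun v hv =>
    ⟨NF (deviations code p v.val (v.val.length + 1)), ?_, isOpen_NF _,
      fun d hd => not_prefix_of_mem_deviations hd⟩
  rintro u hu ⟨w, x, τ, hxu, hx, hw⟩
  by_cases hxv : x <+: v.val
  · exact hv ⟨w, x, τ, hxv, hx, hw⟩
  obtain ⟨i, hi, hiv, hnot⟩ := List.exists_take_succ_not_prefix hxv
  obtain ⟨s₁, hs₁, hrest⟩ := parse_take_eq_some hx i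
  rw [List.drop_eq_getElem_cons hi] at hrest
  obtain ⟨s₂, hstep, -⟩ := parse_cons_eq_some.1 hrest
  have hiv' : i < v.val.length + 1 := by
    have := hiv.length_le
    rw [List.length_take_of_le hi.le] at this
    omega
  exact hu _ (take_succ_mem_deviations hi hiv' hiv hs₁ (isLeast_of_step_eq_some hstep) hnot)
    ((List.take_prefix _ _).trans hxu)

/-! ### Names of `A(p)` -/

theorem le_of_announces_of_isLeaf {m a : ℕ} (hw : IsLeaf (tree code p) w)
    (hp : p' ∈ cylinder p m) (ha : Announces code p' w a) : m ≤ a := by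
  by_contra! ham
  obtain ⟨e, he, hwe, hne⟩ := (announces_congr hp ham).1 ha
  exact hne (hw.2 e ⟨a, he⟩ hwe).symm

variable (code) in
def Certifies (p : ℕ → ℕ) (m : ℕ) (F : Finset (List ℕ)) : Prop :=
  ∀ p' ∈ cylinder p m, FSLTree (tree code p') → (NF F ∩ answerSet code p').Nonempty

theorem exists_certifies (hcode : Function.Injective code) {F : Finset (List ℕ)}
    (h : (NF F ∩ answerSet code p).Nonempty) : ∃ m, Certifies code p m F := by
  obtain ⟨u, huF, w, x, τ, hxu, hx, hw⟩ := h
  obtain ⟨kw, hkw⟩ := hw.1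
  obtain ⟨M, hM⟩ := (F.biUnion List.toFinset).exists_nat_subset_range
  refine ⟨max (max (τ + 1) (kw + 1)) M, fun p' hp' hT' => ?_⟩
  have hx' : parse code p' ([], 0) x = some (w, τ) :=
    parse_congr hx (cylinder_anti p (by omega) hp')
  have hwT' : w ∈ tree code p' := ⟨kw, (mem_cylinder_iff.1 hp' kw (by omega)).trans hkw⟩
  by_cases hleaf : IsLeaf (tree code p') w
  · exact ⟨u, huF, w, x, τ, hxu, hx', hleaf⟩
  obtain ⟨w', hw', hww', hne⟩ := exists_isLeaf_of_not_isLeaf hT' hwT' hleaf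
  obtain ⟨A, hA⟩ := hw'.1
  have hann : Announces code p' w A := ⟨w', hA, hww', hne⟩
  have hτA := le_of_announces_of_isLeaf hw hp' hann
  obtain ⟨y, hy, hyA⟩ := exists_parse_of_announces w τ A (by omega) hann
  rw [invFun_sub_one hcode hA] at hy
  -- the letters of `y` carry stamps at least `m`, so they occur in no word of `F`
  refine ⟨⟨x ++ y⟩, fun f hf hfxy => huF f hf ?_,
    w', x ++ y, A + 1, List.prefix_refl _, parse_append_eq_some.2 ⟨_, hx', hy⟩, hw'⟩
  refine (hfxy.of_append_of_forall_notMem fun ℓ hℓ hℓf => ?_).trans hxu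
  have h1 := le_of_announces_of_isLeaf hw hp' (hyA ℓ hℓ)
  have h2 := Finset.mem_range.1 (hM (Finset.mem_biUnion.2 ⟨f, hf, List.mem_toFinset.2 hℓf⟩))
  omega

variable (code encF) in
open scoped Classical in
noncomputable def closedName (p : ℕ → ℕ) (n : ℕ) : ℕ :=
  if ∃ F, encF F = n.unpair.1 ∧ Certifies code p n.unpair.2 F then n.unpair.1 + 1 else 0

theorem closedName_spec (hcode : Function.Injective code) (hp : FSLTree (tree code p)) :
    S0ClosedName encF (answerSet code p) (closedName code encF p) := by
  ext n
  constructor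
  · rintro ⟨F, rfl, hne⟩
    obtain ⟨m, hm⟩ := exists_certifies hcode hne
    refine ⟨Nat.pair (encF F) m, ?_⟩
    rw [closedName, Nat.unpair_pair, if_pos ⟨F, rfl, hm⟩]
  · rintro ⟨k, hk⟩
    unfold closedName at hk
    split_ifs at hk with hcond
    obtain ⟨F, hF, hcert⟩ := hcond
    exact ⟨F, by omega, hcert p (self_mem_cylinder p _) hp⟩

theorem certifies_congr {m : ℕ} {F : Finset (List ℕ)} (hp : p' ∈ cylinder p m) :
    Certifies code p' m F ↔ Certifies code p m F := by
  rw [Certifies, Certifies, mem_cylinder_iff_eq.1 hp]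

theorem closedName_congr {n : ℕ} (hp : p' ∈ cylinder p n.unpair.2) :
    closedName code encF p' n = closedName code encF p n := by
  classical
  exact if_congr (exists_congr fun _ => and_congr_right fun _ => certifies_congr hp) rfl rfl

theorem continuous_closedName : Continuous (closedName code encF) :=
  continuous_pi fun n => ((IsLocallyConstant.iff_eventually_eq _).2 fun p =>
    Filter.mem_of_superset (PiNat.cylinder_mem_nhds p n.unpair.2) fun _ hp' =>
      closedName_congr hp').continuous

/-! ### Recovering the leaf -/

theorem exists_deviation_prefix_of_parse {x₀ x' : List ℕ} {s₀ s' : List Bool × ℕ} {k : ℕ}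
    (hx₀ : parse code p ([], 0) x₀ = some s₀) (hp : p' ∈ cylinder p k) (hk : s₀.2 < k)
    (hx' : parse code p' ([], 0) x' = some s') (h₀ : ¬ x₀ <+: x') (h' : ¬ x' <+: x₀) :
    ∃ d ∈ deviations code p x₀ x₀.length, d <+: x' := by
  obtain ⟨i, hi, hiv, hnot⟩ := List.exists_take_succ_not_prefix h'
  have hlen : (x'.take i).length = i := List.length_take_of_le hi.le
  have hi₀ : i < x₀.length := by
    by_contra! hle
    exact h₀ (hiv.eq_of_length (le_antisymm hiv.length_le (by omega)) ▸ List.take_prefix i x')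
  have hz : x'.take i = x₀.take i := by rw [List.prefix_iff_eq_take.1 hiv, hlen]
  obtain ⟨s, hs, hrest⟩ := parse_take_eq_some hx₀ i
  rw [List.drop_eq_getElem_cons hi₀] at hrest
  obtain ⟨s₁, hb, hrest'⟩ := parse_cons_eq_some.1 hrest
  have hbk : x₀[i] / 2 < k := by
    have := step_eq_some_snd hb
    have := le_of_parse_eq_some hrest'
    omega
  obtain ⟨s₂, hs₂, hrest''⟩ := parse_take_eq_some hx' i
  rw [List.drop_eq_getElem_cons hi] at hrest''
  obtain ⟨s₃, ha, -⟩ := parse_cons_eq_some.1 hrest''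
  have hs₂s : s₂ = s := by
    rw [hz, parse_congr hs (cylinder_anti p ((le_of_parse_eq_some hrest).trans hk.le) hp)]
      at hs₂
    exact (Option.some_injective _ hs₂).symm
  subst hs₂s
  exact ⟨_, take_succ_mem_deviations hi hi₀ hiv (hz ▸ hs)
    (isLeast_of_step_of_agree hb ha hp hbk) hnot, List.take_prefix _ _⟩

theorem prefix_of_parse_of_agree (hcode : Function.Injective code) {x₀ x' : List ℕ}
    {w' : List Bool} {τ₀ τ' k kw : ℕ}
    (hx₀ : parse code p ([], 0) x₀ = some (w, τ₀)) (hkw : p kw = code w + 1)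
    (hp : p' ∈ cylinder p k) (hτk : τ₀ < k) (hkwk : kw < k)
    (hx' : parse code p' ([], 0) x' = some (w', τ')) (hw' : IsLeaf (tree code p') w')
    (hdev : ∀ d ∈ deviations code p x₀ x₀.length, ¬ d <+: x') : w <+: w' := by
  by_cases h₀ : x₀ <+: x'
  · obtain ⟨t, rfl⟩ := h₀
    obtain ⟨s, hs, ht⟩ := parse_append_eq_some.1 hx'
    rw [parse_congr hx₀ (cylinder_anti p hτk.le hp)] at hs
    cases hs
    exact prefix_of_parse_eq_some hcode ht
  by_cases h' : x' <+: x₀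
  · obtain ⟨t, rfl⟩ := h'
    obtain ⟨s, hs, ht⟩ := parse_append_eq_some.1 hx₀
    have hs' := parse_congr hs (cylinder_anti p ((le_of_parse_eq_some ht).trans hτk.le) hp)
    rw [hx'] at hs'
    cases hs'
    rw [hw'.2 w ⟨kw, (mem_cylinder_iff.1 hp kw hkwk).trans hkw⟩ (prefix_of_parse_eq_some hcode ht)]
  obtain ⟨d, hd, hdx'⟩ := exists_deviation_prefix_of_parse hx₀ hp hτk hx' h₀ h'
  exact absurd hdx' (hdev d hd)

variable (code encF) in
def Safe (p q : ℕ → ℕ) (k : ℕ) (c : List Bool) : Prop :=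
  ∀ p' ∈ cylinder p k, ∀ q' ∈ cylinder q k, ∀ u w,
    S0PointName encF u q' → Encodes code p' u w → c <+: w

theorem Safe.prefix {k : ℕ} {c : List Bool} (hc : Safe code encF p q k c)
    (hq : S0PointName encF u q) (hw : Encodes code p u w) : c <+: w :=
  hc p (self_mem_cylinder p k) q (self_mem_cylinder q k) u w hq hw

theorem Safe.of_prefix {k : ℕ} {c c' : List Bool} (hc : Safe code encF p q k c) (h : c' <+: c) :
    Safe code encF p q k c' :=
  fun p' hp q' hq u w hu hw => h.trans (hc p' hp q' hq u w hu hw)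

theorem eventually_safe (hcode : Function.Injective code) (hencF : Function.Injective encF)
    (hq : S0PointName encF u q) (hw : Encodes code p u w) :
    ∃ B, ∀ k ≥ B, Safe code encF p q k w := by
  obtain ⟨x₀, τ₀, hxu, hx₀, hwl⟩ := hw
  obtain ⟨kw, hkw⟩ := hwl.1
  set D := deviations code p x₀ x₀.length
  have huD : u ∈ NF D := fun d hd hdu => not_prefix_of_mem_deviations hd
    (List.prefix_of_prefix_length_le hdu hxu (length_le_of_mem_deviations hd))
  obtain ⟨κ, hκ⟩ := hq.exists_eq huD
  refine ⟨max (κ + 1) (max (τ₀ + 1) (kw + 1)),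
    fun k hk p' hp q' hq' u' w' hu' ⟨x', τ', hx'u', hx', hw'⟩ => ?_⟩
  -- `q'` still lists the code of `D` at stage `κ`, so `u'` avoids every deviation from `x₀`
  have hu'D : u' ∈ NF D := hu'.mem_NF hencF ((mem_cylinder_iff.1 hq' κ (by omega)).trans hκ)
  exact prefix_of_parse_of_agree hcode hx₀ hkw hp (by omega) (by omega) hx' hw'
    fun d hd hdx' => hu'D d hd (hdx'.trans hx'u')

variable (code encF) in
open scoped Classical in
noncomputable def safePrefix (p q : ℕ → ℕ) : ℕ → List Bool
  | 0 => []
  | k + 1 =>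
    if Safe code encF p q (k + 1) (safePrefix p q k ++ [true]) then safePrefix p q k ++ [true]
    else if Safe code encF p q (k + 1) (safePrefix p q k ++ [false]) then
      safePrefix p q k ++ [false]
    else safePrefix p q k

theorem safePrefix_succ (k : ℕ) : ∃ d : List Bool, d.length ≤ 1 ∧
    safePrefix code encF p q (k + 1) = safePrefix code encF p q k ++ d := by
  rw [safePrefix]
  split_ifs
  · exact ⟨[true], le_rfl, rfl⟩
  · exact ⟨[false], le_rfl, rfl⟩
  · exact ⟨[], zero_le_one, (List.append_nil _).symm⟩

theorem safePrefix_prefix (hq : S0PointName encF u q) (hw : Encodes code p u w) (k : ℕ) :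
    safePrefix code encF p q k <+: w := by
  cases k with
  | zero => exact List.nil_prefix
  | succ k =>
    rw [safePrefix]
    split_ifs with h₁ h₂
    · exact h₁.prefix hq hw
    · exact h₂.prefix hq hw
    · exact safePrefix_prefix hq hw k

theorem length_safePrefix_lt_succ (hq : S0PointName encF u q) (hw : Encodes code p u w)
    {k : ℕ} (hne : safePrefix code encF p q k ≠ w) (hsafe : Safe code encF p q (k + 1) w) :
    (safePrefix code encF p q k).length < (safePrefix code encF p q (k + 1)).length := by
  set c := safePrefix code encF p q k with hc
  have hcw : c <+: w := safePrefix_prefix hq hw k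
  have hlt : c.length < w.length :=
    lt_of_le_of_ne hcw.length_le fun h => hne (hcw.eq_of_length h)
  have hnext : Safe code encF p q (k + 1) (c ++ [w[c.length]]) := by
    refine hsafe.of_prefix ?_
    nth_rewrite 1 [List.prefix_iff_eq_take.1 hcw]
    rw [List.take_concat_get']
    exact List.take_prefix _ _
  rw [safePrefix, ← hc]
  split_ifs with h₁ h₂
  · simp
  · simp
  · have hnot : ∀ b, ¬ Safe code encF p q (k + 1) (c ++ [b]) := fun b => by
      cases b <;> assumption
    exact absurd hnext (hnot _)

theorem safePrefix_eventually_eq (hq : S0PointName encF u q) (hw : Encodes code p u w) {B : ℕ}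
    (hB : ∀ k ≥ B, Safe code encF p q k w) :
    ∀ k ≥ B + w.length, safePrefix code encF p q k = w := by
  have hgrow : ∀ d, min d w.length ≤ (safePrefix code encF p q (B + d)).length := by
    intro d
    induction d with
    | zero => simp
    | succ d ih =>
      rw [← Nat.add_assoc]
      obtain ⟨e, -, he⟩ := safePrefix_succ (code := code) (encF := encF) (p := p) (q := q) (B + d)
      have hmono : (safePrefix code encF p q (B + d)).length ≤
          (safePrefix code encF p q (B + d + 1)).length := by
        rw [he, List.length_append]
        omega
      by_cases hdone : safePrefix code encF p q (B + d) = w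
      · rw [hdone] at hmono
        omega
      · have := length_safePrefix_lt_succ hq hw hdone (hB _ (by omega))
        omega
  intro k hk
  have hpre := safePrefix_prefix hq hw k
  refine hpre.eq_of_length (le_antisymm hpre.length_le ?_)
  have := hgrow (k - B)
  rw [Nat.add_sub_cancel' (by omega)] at this
  omega

variable (code encF) in
noncomputable def leafName (pq : (ℕ → ℕ) × (ℕ → ℕ)) : ℕ → Bool :=
  pairName (safePrefix code encF pq.1 pq.2)

theorem deltaS_leafName (hcode : Function.Injective code) (hencF : Function.Injective encF)
    (hq : S0PointName encF u q) (hw : Encodes code p u w) :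
    DeltaS (leafName code encF (p, q)) w := by
  obtain ⟨B, hB⟩ := eventually_safe hcode hencF hq hw
  exact deltaS_pairName rfl safePrefix_succ (safePrefix_eventually_eq hq hw hB)

theorem safe_congr {k : ℕ} {c : List Bool} (hp : p' ∈ cylinder p k) (hq : q' ∈ cylinder q k) :
    Safe code encF p' q' k c ↔ Safe code encF p q k c := by
  rw [Safe, Safe, mem_cylinder_iff_eq.1 hp, mem_cylinder_iff_eq.1 hq]

theorem safePrefix_congr {n : ℕ} (hp : p' ∈ cylinder p n) (hq : q' ∈ cylinder q n) :
    ∀ k ≤ n, safePrefix code encF p' q' k = safePrefix code encF p q k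
  | 0, _ => rfl
  | k + 1, hk => by
    have hp' := cylinder_anti p hk hp
    have hq' := cylinder_anti q hk hq
    rw [safePrefix, safePrefix, safePrefix_congr hp hq k (by omega)]
    classical
    exact if_congr (safe_congr hp' hq') rfl (if_congr (safe_congr hp' hq') rfl rfl)

theorem leafName_congr {m : ℕ} (hp : p' ∈ cylinder p (m / 2 + 1))
    (hq : q' ∈ cylinder q (m / 2 + 1)) :
    leafName code encF (p', q') m = leafName code encF (p, q) m := by
  simp only [leafName, pairName, safePrefix_congr hp hq _ le_rfl,
    safePrefix_congr hp hq (m / 2) (by omega)]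

theorem continuous_leafName : Continuous (leafName code encF) :=
  continuous_pi fun m => ((IsLocallyConstant.iff_eventually_eq _).2 fun ⟨p, q⟩ =>
    Filter.mem_of_superset (prod_mem_nhds (cylinder_mem_nhds p (m / 2 + 1))
      (cylinder_mem_nhds q (m / 2 + 1))) fun ⟨_, _⟩ ⟨hp, hq⟩ => leafName_congr hp hq).continuous

end FSLReduction

/-- FSL is topologically Weihrauch reducible to overt choice for `S₀`. -/
theorem FSL_reducible_overt_choice_S0
    (code : List Bool → ℕ) (hcode : Function.Injective code)
    (encF : Finset (List ℕ) → ℕ) (hencF : Function.Injective encF) :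
    ∃ (K : (ℕ → ℕ) → (ℕ → ℕ)) (Aset : (ℕ → ℕ) → Set S0)
      (H : (ℕ → ℕ) × (ℕ → ℕ) → (ℕ → Bool)),
      ContinuousOn K {p | ∃ T, FSLTree T ∧ EnumeratesTree code p T} ∧
      (∀ (p : ℕ → ℕ) (T : Set (List Bool)), FSLTree T → EnumeratesTree code p T →
        (Aset p).Nonempty ∧ IsClosed (Aset p) ∧ S0ClosedName encF (Aset p) (K p)) ∧
      ContinuousOn H {pq : (ℕ → ℕ) × (ℕ → ℕ) |
        (∃ T, FSLTree T ∧ EnumeratesTree code pq.1 T) ∧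
        ∃ u ∈ Aset pq.1, S0PointName encF u pq.2} ∧
      ∀ (p : ℕ → ℕ) (T : Set (List Bool)), FSLTree T → EnumeratesTree code p T →
        ∀ (q : ℕ → ℕ) (u : S0), u ∈ Aset p → S0PointName encF u q →
          ∃ w : List Bool, DeltaS (H (p, q)) w ∧ IsLeaf T w := by
  open FSLReduction in
  refine ⟨closedName code encF, answerSet code, leafName code encF,
    continuous_closedName.continuousOn, ?_, continuous_leafName.continuousOn, ?_⟩
  · rintro p T hT rfl
    exact ⟨answerSet_nonempty hcode hT, isClosed_answerSet p, closedName_spec hcode hT⟩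
  · rintro p T - rfl q u ⟨w, hw⟩ hq
    exact ⟨w, deltaS_leafName hcode hencF hq hw, hw.isLeaf⟩
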